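/- For every q ∈ (0,1), the series Σ_{n=1}^∞ ([2n−1]·[2n+1])^{−1} · Σ_{k=0}^{2n−1} [2n−k]·[k] converges and its sum equals q²·(1−q²)^{−2}. (Equivalently, the index pairing of the paper, q^{−2}(1−q²)²·Σ_{l ∈ ℕ₀+1/2} Σ_{m=−l}^{l} [l−m+1]·[l+m]/([2l]·[2l+2]), equals 1.) -/

import Mathlib

/-!
Product-to-sum gives `(q - q⁻¹)² [M-k][k] = q^M + q^(-M) - (q^(M-2k) + q^(2k-M))`, and the sum over
`k < M` of the bracket telescopes, so `(q - q⁻¹)² Σ_{k<M} [M-k][k] = (M-1)[M+1] - (M+1)[M-1]`.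
Dividing by `[M-1][M+1]` with `M = 2n+2` turns the `n`-th term into `b n - b (n+1)` for
`b n = (2n+1) / ((q - q⁻¹)² [2n+1])`. Since the terms are nonnegative and `n / [n] → 0`, the series
sums to `b 0 = (q - q⁻¹)⁻² = q² / (1 - q²)²`.
-/

noncomputable section

namespace Podles

def qn (q x : ℝ) : ℝ := (q ^ x - q ^ (-x)) / (q - q⁻¹)

open Filter Topology

section QNumbers

variable {q : ℝ}

theorem sub_inv_ne_zero (hq : 0 < q) (hq1 : q ≠ 1) : q - q⁻¹ ≠ 0 := by
  intro h
  have : q * q = 1 := by field_simp at h; linarith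
  rcases mul_self_eq_one_iff.mp this with h1 | h1 <;> [exact hq1 h1; linarith]

theorem qn_one (hq : 0 < q) (hq1 : q ≠ 1) : qn q 1 = 1 := by
  rw [qn, Real.rpow_one, Real.rpow_neg_one, div_self (sub_inv_ne_zero hq hq1)]

theorem qn_neg (x : ℝ) : qn q (-x) = -qn q x := by
  rw [qn, qn, neg_neg, ← neg_div, neg_sub]

theorem qn_add_one_sub_qn_sub_one (hq : 0 < q) (hq1 : q ≠ 1) (x : ℝ) :
    qn q (x + 1) - qn q (x - 1) = q ^ x + q ^ (-x) := by
  have hc := sub_inv_ne_zero hq hq1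
  rw [qn, qn, ← sub_div, div_eq_iff hc, neg_add', neg_sub', Real.rpow_add hq, Real.rpow_sub hq,
    Real.rpow_sub hq, Real.rpow_sub hq, Real.rpow_one, Real.rpow_neg_one]
  field_simp
  ring

theorem sub_inv_sq_mul_qn_mul_qn (hq : 0 < q) (hq1 : q ≠ 1) (x y : ℝ) :
    (q - q⁻¹) ^ 2 * (qn q x * qn q y) =
      q ^ (x + y) + q ^ (-(x + y)) - (q ^ (x - y) + q ^ (y - x)) := by
  rw [qn, qn, div_mul_div_comm, ← sq, mul_div_cancel₀ _ (pow_ne_zero 2 (sub_inv_ne_zero hq hq1)),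
    neg_add, Real.rpow_add hq, Real.rpow_add hq, Real.rpow_sub hq, Real.rpow_sub hq,
    Real.rpow_neg hq.le, Real.rpow_neg hq.le]
  have : q ^ x ≠ 0 := by positivity
  have : q ^ y ≠ 0 := by positivity
  field_simp
  ring

theorem sum_range_rpow_add_rpow_neg (hq : 0 < q) (hq1 : q ≠ 1) (x : ℝ) (M : ℕ) :
    ∑ k ∈ Finset.range M, (q ^ (x - 2 * k) + q ^ (-(x - 2 * k))) =
      qn q (x + 1) - qn q (x + 1 - 2 * M) := by
  induction M with
  | zero => simp
  | succ M ih =>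
    rw [Finset.sum_range_succ, ih, ← qn_add_one_sub_qn_sub_one hq hq1]
    push_cast
    ring_nf

theorem sum_range_qn_sub_mul_qn (hq : 0 < q) (hq1 : q ≠ 1) (M : ℕ) :
    ∑ k ∈ Finset.range M, qn q (M - k) * qn q k =
      ((M - 1) * qn q (M + 1) - (M + 1) * qn q (M - 1)) / (q - q⁻¹) ^ 2 := by
  rw [eq_div_iff (pow_ne_zero 2 (sub_inv_ne_zero hq hq1)), Finset.sum_mul]
  have hterm : ∀ k : ℕ, qn q (M - k) * qn q k * (q - q⁻¹) ^ 2 =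
      q ^ (M : ℝ) + q ^ (-(M : ℝ)) - (q ^ ((M : ℝ) - 2 * k) + q ^ (-((M : ℝ) - 2 * k))) := by
    intro k
    rw [mul_comm, sub_inv_sq_mul_qn_mul_qn hq hq1, sub_add_cancel,
      show (M : ℝ) - k - k = M - 2 * k by ring, show (k : ℝ) - (M - k) = -(M - 2 * k) by ring]
  rw [Finset.sum_congr rfl fun k _ => hterm k, Finset.sum_sub_distrib,
    sum_range_rpow_add_rpow_neg hq hq1, Finset.sum_const, Finset.card_range, nsmul_eq_mul,
    ← qn_add_one_sub_qn_sub_one hq hq1, show (M : ℝ) + 1 - 2 * M = -(M - 1) by ring, qn_neg]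
  ring

theorem qn_pos (hq0 : 0 < q) (hq1 : q < 1) {x : ℝ} (hx : 0 < x) : 0 < qn q x := by
  refine div_pos_of_neg_of_neg ?_ ?_
  · exact sub_neg.2 (Real.rpow_lt_rpow_of_exponent_gt hq0 hq1 (by linarith))
  · exact sub_neg.2 (hq1.trans ((one_lt_inv₀ hq0).2 hq1))

theorem qn_nonneg (hq0 : 0 < q) (hq1 : q < 1) {x : ℝ} (hx : 0 ≤ x) : 0 ≤ qn q x := by
  rcases hx.eq_or_lt with rfl | hx
  · simp [qn]
  · exact (qn_pos hq0 hq1 hx).le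

theorem inv_qn_mul_qn_mul_sum_range (hq0 : 0 < q) (hq1 : q < 1) {M : ℕ} (hM : 2 ≤ M) :
    (qn q (M - 1) * qn q (M + 1))⁻¹ * ∑ k ∈ Finset.range M, qn q (M - k) * qn q k =
      ((M - 1) / qn q (M - 1) - (M + 1) / qn q (M + 1)) / (q - q⁻¹) ^ 2 := by
  have hM' : (2 : ℝ) ≤ M := by exact_mod_cast hM
  have h₁ := (qn_pos hq0 hq1 (by linarith : (0 : ℝ) < M - 1)).ne'
  have h₂ := (qn_pos hq0 hq1 (by linarith : (0 : ℝ) < M + 1)).ne'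
  rw [sum_range_qn_sub_mul_qn hq0 hq1.ne]
  field_simp

theorem tendsto_natCast_div_qn (hq0 : 0 < q) (hq1 : q < 1) :
    Tendsto (fun n : ℕ => (n : ℝ) / qn q n) atTop (𝓝 0) := by
  have hform : ∀ n : ℕ, (n : ℝ) / qn q n = (q - q⁻¹) * (n * q ^ n) / ((q ^ n) ^ 2 - 1) := by
    intro n
    have : q ^ n ≠ 0 := by positivity
    rw [qn, Real.rpow_neg hq0.le, Real.rpow_natCast, div_div_eq_mul_div]
    field_simp
  have hpow := tendsto_pow_atTop_nhds_zero_of_lt_one hq0.le hq1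
  rw [show (0 : ℝ) = (q - q⁻¹) * 0 / (0 ^ 2 - 1) by simp]
  exact (tendsto_congr hform).2 <|
    ((tendsto_self_mul_const_pow_of_lt_one hq0.le hq1).const_mul _).div
      ((hpow.pow 2).sub_const 1) (by norm_num)

end QNumbers

theorem hasSum_of_nonneg_of_eq_sub_succ {f b : ℕ → ℝ} (hf : ∀ n, 0 ≤ f n)
    (hfb : ∀ n, f n = b n - b (n + 1)) (hb : Tendsto b atTop (𝓝 0)) : HasSum f (b 0) := by
  rw [hasSum_iff_tendsto_nat_of_nonneg hf]
  simp only [hfb, Finset.sum_range_sub']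
  simpa using hb.const_sub (b 0)

/-- `Σ_{n≥1} ([2n−1][2n+1])⁻¹ Σ_{k=0}^{2n−1} [2n−k][k] = q²(1−q²)⁻²`. -/
theorem statement18 (q : ℝ) (hq0 : 0 < q) (hq1 : q < 1) :
    HasSum
      (fun n : ℕ =>
        (qn q (2 * (n : ℝ) + 1) * qn q (2 * (n : ℝ) + 3))⁻¹ *
          ∑ k ∈ Finset.range (2 * n + 2), qn q (2 * (n : ℝ) + 2 - (k : ℝ)) * qn q (k : ℝ))
      (q ^ 2 * ((1 - q ^ 2) ^ 2)⁻¹) := by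
  set b : ℕ → ℝ := fun n => ((2 * n + 1 : ℕ) : ℝ) / qn q (2 * n + 1 : ℕ) / (q - q⁻¹) ^ 2
  have hb0 : b 0 = q ^ 2 * ((1 - q ^ 2) ^ 2)⁻¹ := by
    have hq : q ≠ 0 := hq0.ne'
    simp only [b, mul_zero, zero_add, Nat.cast_one, qn_one hq0 hq1.ne, div_one, one_div]
    rw [show (q - q⁻¹) ^ 2 = (1 - q ^ 2) ^ 2 / q ^ 2 by field_simp; ring, inv_div, div_eq_mul_inv]
  refine hb0 ▸ hasSum_of_nonneg_of_eq_sub_succ (fun n => ?_) (fun n => ?_) ?_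
  · refine mul_nonneg (inv_nonneg.2 (mul_nonneg (qn_nonneg hq0 hq1 (by positivity))
      (qn_nonneg hq0 hq1 (by positivity)))) (Finset.sum_nonneg fun k hk => ?_)
    have hk : (k : ℝ) < 2 * n + 2 := by exact_mod_cast Finset.mem_range.1 hk
    exact mul_nonneg (qn_nonneg hq0 hq1 (by linarith)) (qn_nonneg hq0 hq1 k.cast_nonneg)
  · have h := inv_qn_mul_qn_mul_sum_range hq0 hq1 (show 2 ≤ 2 * n + 2 by omega)
    push_cast at h
    simp only [b]
    push_cast
    convert h using 3 <;> ring_nf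
  · have hodd : Tendsto (fun n : ℕ => 2 * n + 1) atTop atTop :=
      tendsto_atTop_mono (fun n => show n ≤ 2 * n + 1 by omega) tendsto_id
    simpa [b] using ((tendsto_natCast_div_qn hq0 hq1).comp hodd).div_const ((q - q⁻¹) ^ 2)

end Podles
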